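/- arXiv:0907.0429 — 4 statements merged into one kernel-verified Lean document; each statement's English description precedes it below -/
import Mathlib

section
/- (Anderson, 1976) Let n ≥ 2, let true points (x*₁,y*₁),…,(x*ₙ,y*ₙ) lie on a line y = α* + β*x, and let observed points be xᵢ = x*ᵢ + δᵢ, yᵢ = y*ᵢ + εᵢ where δ₁,…,δₙ,ε₁,…,εₙ are i.i.d. normal random variables with mean 0 and variance σ² > 0. Define the orthogonal-regression slope estimate β̂ = (s_yy − s_xx + √((s_yy−s_xx)² + 4s_xy²))/(2 s_xy) on the event s_xy ≠ 0 (and arbitrarily, say β̂ = 0, on the null event s_xy = 0). Then E(|β̂|) = ∞. -/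
/-!
Split the observations into `X = x_{i₀}` and the vector `V` of the other `2n - 1`, which is
independent of `X`. The covariance is affine in `X`: `s_xy = R(V) + X W(V)` with
`W = y_{i₀} - ȳ`. On a box of positive probability for `V` (`y_{i₀}` large, all other
observations bounded), `W` is large, the root `-R/W` lies in `[-2, 2]` and `s_yy - s_xx ≥ 1`
whenever `|X| ≤ 2`, so that `|β̂| ≥ 1 / |R + X W|`. As `X` has a density bounded below on
`[-2, 2]` and `t ↦ 1 / |t - c|` is not integrable near `c`, the conditional expectation of
`|β̂|` given any `V` in the box is infinite.
-/

open MeasureTheory ProbabilityTheory Set Function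
open scoped ENNReal NNReal

section Scatter

open Finset

variable {ι : Type*} [Fintype ι]

noncomputable def sampleMean (x : ι → ℝ) : ℝ := (∑ i, x i) / Fintype.card ι

noncomputable def scatter (x y : ι → ℝ) : ℝ :=
  ∑ i, (x i - sampleMean x) * (y i - sampleMean y)

theorem sum_sub_sampleMean (y : ι → ℝ) : ∑ i, (y i - sampleMean y) = 0 := by
  rw [sum_sub_distrib, sum_const, card_univ, nsmul_eq_mul, sampleMean]
  rcases eq_or_ne (Fintype.card ι : ℝ) 0 with h | h
  · rw [Nat.cast_eq_zero, Fintype.card_eq_zero_iff] at h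
    simp
  · rw [mul_div_cancel₀ _ h, sub_self]

theorem scatter_eq_sum_mul (x y : ι → ℝ) : scatter x y = ∑ i, x i * (y i - sampleMean y) := by
  simp only [scatter, sub_mul]
  rw [sum_sub_distrib, ← mul_sum, sum_sub_sampleMean, mul_zero, sub_zero]

theorem scatter_update [DecidableEq ι] (x y : ι → ℝ) (i : ι) (t : ℝ) :
    scatter (update x i t) y = scatter x y + (t - x i) * (y i - sampleMean y) := by
  have h : ∀ j, update x i t j * (y j - sampleMean y)
      = x j * (y j - sampleMean y) + if j = i then (t - x i) * (y i - sampleMean y) else 0 := by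
    intro j
    by_cases hj : j = i
    · subst hj; simp only [update_self, if_true]; ring
    · simp [hj]
  simp only [scatter_eq_sum_mul, h, sum_add_distrib, sum_ite_eq', Finset.mem_univ, if_true]

theorem scatter_self_le_sum_sq (x : ι → ℝ) : scatter x x ≤ ∑ i, x i ^ 2 := by
  have h : sampleMean x * ∑ i, x i = (∑ i, x i) ^ 2 / Fintype.card ι := by
    rw [sampleMean]; ring
  have : 0 ≤ sampleMean x * ∑ i, x i := h ▸ by positivity
  rw [scatter_eq_sum_mul]
  simp only [mul_sub, sum_sub_distrib, ← sum_mul, ← sq]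
  linarith [mul_comm (∑ i, x i) (sampleMean x)]

theorem sq_sub_sampleMean_le_scatter_self (y : ι → ℝ) (i : ι) :
    (y i - sampleMean y) ^ 2 ≤ scatter y y := by
  rw [scatter, sq]
  exact single_le_sum (f := fun j => (y j - sampleMean y) * (y j - sampleMean y))
    (fun j _ => mul_self_nonneg _) (Finset.mem_univ i)

theorem abs_scatter_le [DecidableEq ι] {x y : ι → ℝ} {i₀ : ι} (hx : ∀ i, |x i| ≤ 1)
    (hy : ∀ i ≠ i₀, y i ≤ sampleMean y) :
    |scatter x y| ≤ 2 * (y i₀ - sampleMean y) := by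
  set d := fun i => y i - sampleMean y
  -- the deviations sum to `0` and all but `d i₀` are `≤ 0`, so `∑ |d i| = 2 d i₀`
  have hd : ∀ i, |d i| ≤ (if i = i₀ then 2 * d i₀ else 0) - d i := by
    have hi₀ : 0 ≤ d i₀ := by
      calc 0 = ∑ i, d i := (sum_sub_sampleMean y).symm
        _ ≤ ∑ i, if i = i₀ then d i₀ else 0 := sum_le_sum fun i _ => by
            split_ifs with h
            · rw [h]
            · exact sub_nonpos.2 (hy i h)
        _ = d i₀ := by rw [sum_ite_eq', if_pos (Finset.mem_univ _)]
    intro i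
    split_ifs with h
    · subst h; rw [abs_of_nonneg hi₀]; linarith
    · rw [abs_of_nonpos (sub_nonpos.2 (hy i h))]; simp [d]
  calc |scatter x y| = |∑ i, x i * d i| := by rw [scatter_eq_sum_mul]
    _ ≤ ∑ i, |d i| := (abs_sum_le_sum_abs _ _).trans (sum_le_sum fun i _ => by
        rw [abs_mul]; exact mul_le_of_le_one_left (abs_nonneg _) (hx i))
    _ ≤ ∑ i, ((if i = i₀ then 2 * d i₀ else 0) - d i) := sum_le_sum fun i _ => hd i
    _ = 2 * (y i₀ - sampleMean y) := by
        rw [sum_sub_distrib, sum_ite_eq', if_pos (Finset.mem_univ _), sum_sub_sampleMean,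
          sub_zero]

end Scatter

noncomputable def orthogonalSlope (sxx syy sxy : ℝ) : ℝ :=
  if sxy ≠ 0 then (syy - sxx + √((syy - sxx) ^ 2 + 4 * sxy ^ 2)) / (2 * sxy) else 0

theorem inv_abs_le_abs_orthogonalSlope {sxx syy sxy : ℝ} (h : 1 ≤ syy - sxx) :
    |sxy|⁻¹ ≤ |orthogonalSlope sxx syy sxy| := by
  rw [orthogonalSlope]
  split_ifs with hs
  · have hsqrt : syy - sxx ≤ √((syy - sxx) ^ 2 + 4 * sxy ^ 2) :=
      Real.le_sqrt_of_sq_le (by nlinarith)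
    have hnum : 2 ≤ syy - sxx + √((syy - sxx) ^ 2 + 4 * sxy ^ 2) := by linarith
    calc |sxy|⁻¹ = 2 / (2 * |sxy|) := by field_simp
      _ ≤ (syy - sxx + √((syy - sxx) ^ 2 + 4 * sxy ^ 2)) / (2 * |sxy|) := by gcongr
      _ = _ := by rw [abs_div, abs_mul, abs_two, abs_of_pos (by linarith : (0 : ℝ) < _ + _)]
  · simp [not_not.1 hs] -- both sides vanish, as `0⁻¹ = 0`

theorem lintegral_inv_abs_sub_eq_top {a b c : ℝ} (hab : a < b) (hc : c ∈ Icc a b) :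
    ∫⁻ x in Icc a b, ENNReal.ofReal |x - c|⁻¹ = ∞ := by
  by_contra hfin
  have hint : IntegrableOn (fun x => (x - c)⁻¹) (Icc a b) := by
    refine ⟨(by fun_prop : Measurable fun x : ℝ => (x - c)⁻¹).aestronglyMeasurable, ?_⟩
    simpa [HasFiniteIntegral, ← ofReal_norm, lt_top_iff_ne_top] using hfin
  have := intervalIntegrable_sub_inv_iff.1
    ((intervalIntegrable_iff_integrableOn_Icc_of_le hab.le).2 hint)
  rw [uIcc_of_le hab.le] at this
  exact this.elim hab.ne (· hc)

theorem setLIntegral_gaussianReal_eq_top {m : ℝ} {v : ℝ≥0} (hv : v ≠ 0) {s : Set ℝ}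
    (hs : IsCompact s) {f : ℝ → ℝ≥0∞} (hf : ∫⁻ x in s, f x = ∞) :
    ∫⁻ x in s, f x ∂gaussianReal m v = ∞ := by
  obtain rfl | hne := s.eq_empty_or_nonempty
  · simp at hf
  obtain ⟨x₀, -, hmin⟩ := hs.exists_isMinOn hne
    (by unfold gaussianPDFReal; fun_prop : Continuous (gaussianPDFReal m v)).continuousOn
  have hdens : ENNReal.ofReal (gaussianPDFReal m v x₀) • volume.restrict s
      ≤ (gaussianReal m v).restrict s := by
    rw [gaussianReal_of_var_ne_zero _ hv, restrict_withDensity hs.measurableSet,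
      ← withDensity_const]
    refine withDensity_mono ((ae_restrict_iff' hs.measurableSet).2 (ae_of_all _ fun x hx => ?_))
    exact ENNReal.ofReal_le_ofReal (hmin hx)
  refine top_le_iff.1 ((lintegral_mono' hdens le_rfl).trans' ?_)
  rw [lintegral_smul_measure, hf, smul_eq_mul, ENNReal.mul_top]
  exact (ENNReal.ofReal_pos.2 (gaussianPDFReal_pos _ _ _ hv)).ne'

theorem setLIntegral_gaussianReal_inv_abs_affine_eq_top {m : ℝ} {v : ℝ≥0} (hv : v ≠ 0)
    {a b r w : ℝ} (hab : a < b) (hw : w ≠ 0) (hroot : -(r / w) ∈ Icc a b) :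
    ∫⁻ x in Icc a b, ENNReal.ofReal |r + x * w|⁻¹ ∂gaussianReal m v = ∞ := by
  have h : ∀ x, ENNReal.ofReal |r + x * w|⁻¹
      = ENNReal.ofReal |w|⁻¹ * ENNReal.ofReal |x - -(r / w)|⁻¹ := by
    intro x
    rw [← ENNReal.ofReal_mul (by positivity), ← mul_inv, ← abs_mul]
    congr 3
    field_simp
    ring
  simp_rw [h]
  rw [lintegral_const_mul' _ _ ENNReal.ofReal_ne_top,
    setLIntegral_gaussianReal_eq_top hv isCompact_Icc (lintegral_inv_abs_sub_eq_top hab hroot),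
    ENNReal.mul_top]
  simpa using hw

section Independence

variable {Ω : Type*} [MeasurableSpace Ω] {μ : Measure Ω}

theorem lintegral_comp_eq_top_of_indepFun [IsFiniteMeasure μ] {α β : Type*}
    [MeasurableSpace α] [MeasurableSpace β] {X : Ω → β} {V : Ω → α} (hX : Measurable X)
    (hV : Measurable V) (hXV : IndepFun X V μ) {G : β × α → ℝ≥0∞} (hG : Measurable G)
    {K : Set α} (hK : MeasurableSet K) (hVK : μ (V ⁻¹' K) ≠ 0)
    (htop : ∀ u ∈ K, ∫⁻ t, G (t, u) ∂μ.map X = ∞) :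
    ∫⁻ ω, G (X ω, V ω) ∂μ = ∞ := by
  rw [← lintegral_map (f := G) hG (hX.prodMk hV),
    (indepFun_iff_map_prod_eq_prod_map_map hX.aemeasurable hV.aemeasurable).1 hXV,
    lintegral_prod_symm' _ hG]
  refine top_le_iff.1 ((setLIntegral_le_lintegral K _).trans' ?_)
  rw [setLIntegral_congr_fun hK htop, setLIntegral_const, ENNReal.top_mul]
  rwa [Measure.map_apply hV hK]

variable {ι β : Type*} [Fintype ι] [MeasurableSpace β] {f : ι → Ω → β}

theorem ProbabilityTheory.iIndepFun.measure_iInter_preimage_ne_zero (hf : iIndepFun f μ)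
    {A : ι → Set β} (hA : ∀ i, MeasurableSet (A i)) (hpos : ∀ i, μ (f i ⁻¹' A i) ≠ 0) :
    μ (⋂ i, f i ⁻¹' A i) ≠ 0 := by
  rw [hf.meas_iInter fun i => ⟨A i, hA i, rfl⟩]
  exact Finset.prod_ne_zero_iff.2 fun i _ => hpos i

variable [DecidableEq ι]

theorem ProbabilityTheory.iIndepFun.indepFun_update (hf : iIndepFun f μ)
    (hfm : ∀ i, Measurable (f i)) (i : ι) (c : β) :
    IndepFun (f i) (fun ω => update (fun j => f j ω) i c) μ := by
  let ψ : (({i}ᶜ : Finset ι) → β) → ι → β :=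
    fun g j => if hj : j = i then c else g ⟨j, by simpa using hj⟩
  have hψ : Measurable ψ := measurable_pi_lambda _ fun j => by
    by_cases hj : j = i
    · simp [ψ, hj]
    · simpa [ψ, hj] using measurable_pi_apply _
  have hrest : (fun ω => update (fun j => f j ω) i c)
      = ψ ∘ fun ω (j : ({i}ᶜ : Finset ι)) => f j ω := by
    funext ω j
    by_cases hj : j = i
    · subst hj; simp [ψ]
    · simp [ψ, hj]
  rw [hrest]
  exact (hf.indepFun_finset {i} {i}ᶜ disjoint_compl_right hfm).comp
    (measurable_pi_apply ⟨i, Finset.mem_singleton_self i⟩) hψ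

theorem ProbabilityTheory.iIndepFun.measure_update_preimage_pi_ne_zero (hf : iIndepFun f μ)
    {A : ι → Set β} (hA : ∀ i, MeasurableSet (A i)) (hpos : ∀ i, μ (f i ⁻¹' A i) ≠ 0)
    {i : ι} {c : β} (hc : c ∈ A i) :
    μ ((fun ω => update (fun j => f j ω) i c) ⁻¹' univ.pi A) ≠ 0 := by
  refine fun h0 => hf.measure_iInter_preimage_ne_zero hA hpos (measure_mono_null ?_ h0)
  intro ω hω j _
  by_cases hj : j = i
  · subst hj; simpa using hc
  · simpa [hj] using mem_iInter.1 hω j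

end Independence

section Observations

variable {ι : Type*}

/-- The estimate as a function of the observation vector `w`, whose coordinates `inl i` and
`inr i` are the observed `xᵢ` and `yᵢ`. -/
noncomputable def slopeEstimate [Fintype ι] (w : ι ⊕ ι → ℝ) : ℝ :=
  orthogonalSlope (scatter (w ∘ Sum.inl) (w ∘ Sum.inl)) (scatter (w ∘ Sum.inr) (w ∘ Sum.inr))
    (scatter (w ∘ Sum.inl) (w ∘ Sum.inr))

def observationBox [DecidableEq ι] (i₀ : ι) (T : ℝ) : ι ⊕ ι → Set ℝ :=
  Sum.elim (fun _ => Icc (-1) 1) fun i => if i = i₀ then Icc T (T + 1) else Icc 0 1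

variable [DecidableEq ι]

theorem measurableSet_observationBox (i₀ : ι) (T : ℝ) (j : ι ⊕ ι) :
    MeasurableSet (observationBox i₀ T j) := by
  rcases j with i | i
  · exact measurableSet_Icc
  · by_cases h : i = i₀ <;> simp [observationBox, h, measurableSet_Icc]

theorem volume_observationBox_ne_zero (i₀ : ι) (T : ℝ) (j : ι ⊕ ι) :
    volume (observationBox i₀ T j) ≠ 0 := by
  rcases j with i | i
  · simp [observationBox]
  · by_cases h : i = i₀ <;> simp [observationBox, h]

variable [Fintype ι] {i₀ : ι} {u : ι ⊕ ι → ℝ}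

theorem sampleMean_mem_Icc_of_mem_observationBox {T : ℝ}
    (hu : u ∈ univ.pi (observationBox i₀ T)) :
    sampleMean (u ∘ Sum.inr) ∈ Icc (T / Fintype.card ι) (T / Fintype.card ι + 1) := by
  have hn : (0 : ℝ) < Fintype.card ι := Nat.cast_pos.2 (Fintype.card_pos_iff.2 ⟨i₀⟩)
  have hbound : ∀ i, (if i = i₀ then T else 0) ≤ u (Sum.inr i) ∧
      u (Sum.inr i) ≤ (if i = i₀ then T else 0) + 1 := by
    intro i
    have := hu (Sum.inr i) (mem_univ _)
    by_cases h : i = i₀ <;> simp_all [observationBox]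
  have hsum : T ≤ ∑ i, u (Sum.inr i) ∧ ∑ i, u (Sum.inr i) ≤ T + Fintype.card ι := by
    constructor
    · simpa using Finset.sum_le_sum fun i (_ : i ∈ Finset.univ) => (hbound i).1
    · simpa [Finset.sum_add_distrib] using
        Finset.sum_le_sum fun i (_ : i ∈ Finset.univ) => (hbound i).2
  rw [sampleMean, div_add_one hn.ne', mem_Icc]
  exact ⟨div_le_div_of_nonneg_right hsum.1 hn.le, div_le_div_of_nonneg_right hsum.2 hn.le⟩

theorem sub_sampleMean_bounds_of_mem_observationBox {T : ℝ} (hι : 2 ≤ Fintype.card ι)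
    (hT : Fintype.card ι ≤ T) (hu : u ∈ univ.pi (observationBox i₀ T)) :
    T / 2 - 1 ≤ u (Sum.inr i₀) - sampleMean (u ∘ Sum.inr) ∧
      |scatter (u ∘ Sum.inl) (u ∘ Sum.inr)| ≤ 2 * (u (Sum.inr i₀) - sampleMean (u ∘ Sum.inr)) := by
  have hn : (2 : ℝ) ≤ Fintype.card ι := by exact_mod_cast hι
  obtain ⟨hlo, hhi⟩ := sampleMean_mem_Icc_of_mem_observationBox hu
  have hTn : T / Fintype.card ι ≤ T / 2 := div_le_div_of_nonneg_left (by linarith) two_pos hn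
  have h1 : 1 ≤ T / Fintype.card ι := (one_le_div (by linarith)).2 hT
  refine ⟨?_, abs_scatter_le (fun i => ?_) fun i hi => ?_⟩
  · have := hu (Sum.inr i₀) (mem_univ _)
    simp only [observationBox, Sum.elim_inr, if_true, mem_Icc] at this
    linarith
  · have := hu (Sum.inl i) (mem_univ _)
    simpa [observationBox, abs_le] using this
  · have := hu (Sum.inr i) (mem_univ _)
    simp only [observationBox, Sum.elim_inr, if_neg hi, mem_Icc] at this
    simp only [comp_apply]
    linarith

theorem inv_abs_le_abs_slopeEstimate_update (hι : 2 ≤ Fintype.card ι)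
    (hu : u ∈ univ.pi (observationBox i₀ (8 * Fintype.card ι + 4))) (hu₀ : u (Sum.inl i₀) = 0)
    {t : ℝ} (ht : t ∈ Icc (-2) 2) :
    |scatter (u ∘ Sum.inl) (u ∘ Sum.inr) + t * (u (Sum.inr i₀) - sampleMean (u ∘ Sum.inr))|⁻¹ ≤
      |slopeEstimate (update u (Sum.inl i₀) t)| := by
  set W := u (Sum.inr i₀) - sampleMean (u ∘ Sum.inr)
  -- `T = 8n + 4` is chosen so that `W ≥ 4n + 1` beats the bound `s_xx ≤ 4n` below
  have hW : 4 * Fintype.card ι + 1 ≤ W := by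
    have := (sub_sampleMean_bounds_of_mem_observationBox hι (by linarith) hu).1
    linarith
  have hx : update u (Sum.inl i₀) t ∘ Sum.inl = update (u ∘ Sum.inl) i₀ t :=
    update_comp_eq_of_injective _ Sum.inl_injective _ _
  have hy : update u (Sum.inl i₀) t ∘ Sum.inr = u ∘ Sum.inr :=
    update_comp_eq_of_forall_ne _ _ fun _ => Sum.inr_ne_inl
  have hx2 : ∀ i, update (u ∘ Sum.inl) i₀ t i ^ 2 ≤ 4 := by
    intro i
    have hi : update (u ∘ Sum.inl) i₀ t i ∈ Icc (-2) 2 := by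
      by_cases h : i = i₀
      · subst h; simpa using ht
      · have := hu (Sum.inl i) (mem_univ _)
        simp only [observationBox, Sum.elim_inl, mem_Icc] at this
        simp only [update_of_ne h, comp_apply, mem_Icc]
        constructor <;> linarith
    nlinarith [hi.1, hi.2]
  have hsxx : scatter (update (u ∘ Sum.inl) i₀ t) (update (u ∘ Sum.inl) i₀ t)
      ≤ 4 * Fintype.card ι := (scatter_self_le_sum_sq _).trans <| by
    simpa [mul_comm] using Finset.sum_le_sum fun i (_ : i ∈ Finset.univ) => hx2 i
  have hsyy : W ≤ scatter (u ∘ Sum.inr) (u ∘ Sum.inr) :=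
    (le_self_pow₀ (by linarith) two_ne_zero).trans
      (sq_sub_sampleMean_le_scatter_self (u ∘ Sum.inr) i₀)
  rw [slopeEstimate, hx, hy, scatter_update (u ∘ Sum.inl) (u ∘ Sum.inr), comp_apply, hu₀,
    sub_zero]
  exact inv_abs_le_abs_orthogonalSlope (by linarith)

theorem setLIntegral_gaussianReal_inv_abs_scatter_affine_eq_top (hι : 2 ≤ Fintype.card ι)
    (hu : u ∈ univ.pi (observationBox i₀ (8 * Fintype.card ι + 4))) {m : ℝ} {v : ℝ≥0}
    (hv : v ≠ 0) :
    ∫⁻ t in Icc (-2) 2, ENNReal.ofReal |scatter (u ∘ Sum.inl) (u ∘ Sum.inr) +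
      t * (u (Sum.inr i₀) - sampleMean (u ∘ Sum.inr))|⁻¹ ∂gaussianReal m v = ∞ := by
  obtain ⟨hW, hR⟩ := sub_sampleMean_bounds_of_mem_observationBox hι (by linarith) hu
  set W := u (Sum.inr i₀) - sampleMean (u ∘ Sum.inr)
  set R := scatter (u ∘ Sum.inl) (u ∘ Sum.inr)
  have hW0 : 0 < W := by linarith [(Nat.cast_nonneg (Fintype.card ι) : (0 : ℝ) ≤ _)]
  have hroot : |R / W| ≤ 2 := by rw [abs_div, abs_of_pos hW0, div_le_iff₀ hW0]; linarith
  refine setLIntegral_gaussianReal_inv_abs_affine_eq_top hv (by norm_num) hW0.ne' ?_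
  constructor <;> linarith [abs_le.1 hroot]

theorem lintegral_abs_slopeEstimate_eq_top {Ω : Type*} [MeasurableSpace Ω] {μ : Measure Ω}
    [IsFiniteMeasure μ] (hι : 2 ≤ Fintype.card ι) {z : ι ⊕ ι → Ω → ℝ}
    (hz : ∀ j, Measurable (z j)) (hind : iIndepFun z μ) {m : ι ⊕ ι → ℝ} {v : ι ⊕ ι → ℝ≥0}
    (hv : ∀ j, v j ≠ 0) (hlaw : ∀ j, μ.map (z j) = gaussianReal (m j) (v j)) :
    ∫⁻ ω, ENNReal.ofReal |slopeEstimate fun j => z j ω| ∂μ = ∞ := by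
  obtain ⟨i₀⟩ : Nonempty ι := Fintype.card_pos_iff.1 (by omega)
  set K := univ.pi (observationBox i₀ (8 * Fintype.card ι + 4))
  have hK : MeasurableSet K := .univ_pi (measurableSet_observationBox _ _)
  set V : Ω → ι ⊕ ι → ℝ := fun ω => update (fun j => z j ω) (Sum.inl i₀) 0
  set G : ℝ × (ι ⊕ ι → ℝ) → ℝ≥0∞ := (Icc (-2) 2 ×ˢ K).indicator fun p =>
    ENNReal.ofReal |scatter (p.2 ∘ Sum.inl) (p.2 ∘ Sum.inr) +
      p.1 * (p.2 (Sum.inr i₀) - sampleMean (p.2 ∘ Sum.inr))|⁻¹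
  have hG : Measurable G :=
    Measurable.indicator (by unfold scatter sampleMean; fun_prop) (measurableSet_Icc.prod hK)
  have hGle : ∀ ω, G (z (Sum.inl i₀) ω, V ω) ≤ ENNReal.ofReal |slopeEstimate fun j => z j ω| := by
    intro ω
    by_cases h : (z (Sum.inl i₀) ω, V ω) ∈ Icc (-2) 2 ×ˢ K
    · have hobs : (fun j => z j ω) = update (V ω) (Sum.inl i₀) (z (Sum.inl i₀) ω) := by simp [V]
      simp only [G, indicator_of_mem h, hobs]
      exact ENNReal.ofReal_le_ofReal (inv_abs_le_abs_slopeEstimate_update hι h.2 (by simp [V]) h.1)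
    · simp only [G, indicator_of_notMem h, zero_le]
  have hVK : μ (V ⁻¹' K) ≠ 0 := by
    refine hind.measure_update_preimage_pi_ne_zero (measurableSet_observationBox _ _)
      (fun j => ?_) (by simp [observationBox])
    rw [← Measure.map_apply (hz j) (measurableSet_observationBox _ _ j), hlaw j]
    exact fun h =>
      volume_observationBox_ne_zero _ _ j (gaussianReal_absolutelyContinuous' _ (hv j) h)
  have hinner : ∀ u ∈ K, ∫⁻ t, G (t, u) ∂μ.map (z (Sum.inl i₀)) = ∞ := by
    intro u hu
    have hGu : (fun t => G (t, u)) = (Icc (-2) 2).indicator fun t => G (t, u) := by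
      funext t
      by_cases ht : t ∈ Icc (-2) 2 <;> simp [G, ht]
    rw [hGu, lintegral_indicator measurableSet_Icc, hlaw,
      setLIntegral_congr_fun measurableSet_Icc fun t ht => indicator_of_mem (mk_mem_prod ht hu) _]
    exact setLIntegral_gaussianReal_inv_abs_scatter_affine_eq_top hι hu (hv _)
  exact top_le_iff.1 ((lintegral_comp_eq_top_of_indepFun (hz _) (by fun_prop)
    (hind.indepFun_update hz _ 0) hG hK hVK hinner).ge.trans (lintegral_mono hGle))

end Observations

theorem anderson_slope_estimate_has_no_moments_general
    {Ω : Type*} [MeasurableSpace Ω] (μ : Measure Ω) [IsProbabilityMeasure μ]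
    (n : ℕ) (hn : 2 ≤ n)
    -- the true points, lying on the true line y = α* + β* x
    (xs ys : Fin n → ℝ)
    -- the errors: δ₁,…,δₙ,ε₁,…,εₙ i.i.d. normal, mean 0, variance σ² > 0
    (σ2 : NNReal) (hσ2 : 0 < σ2)
    (e : Fin n ⊕ Fin n → Ω → ℝ) (hemeas : ∀ j, Measurable (e j))
    (hindep : iIndepFun e μ)
    (hlaw : ∀ j, Measure.map (e j) μ = gaussianReal 0 σ2)
    -- the observed points
    (x y : Fin n → Ω → ℝ)
    (hx : ∀ i ω, x i ω = xs i + e (Sum.inl i) ω)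
    (hy : ∀ i ω, y i ω = ys i + e (Sum.inr i) ω)
    -- sample means and scatter statistics
    (xbar ybar sxx syy sxy : Ω → ℝ)
    (hxbar : ∀ ω, xbar ω = (∑ i, x i ω) / n)
    (hybar : ∀ ω, ybar ω = (∑ i, y i ω) / n)
    (hsxx : ∀ ω, sxx ω = ∑ i, (x i ω - xbar ω) ^ 2)
    (hsyy : ∀ ω, syy ω = ∑ i, (y i ω - ybar ω) ^ 2)
    (hsxy : ∀ ω, sxy ω = ∑ i, (x i ω - xbar ω) * (y i ω - ybar ω))
    -- the orthogonal-regression slope estimate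
    (βhat : Ω → ℝ)
    (hβhat : ∀ ω, βhat ω =
      if sxy ω ≠ 0 then
        (syy ω - sxx ω + Real.sqrt ((syy ω - sxx ω) ^ 2 + 4 * sxy ω ^ 2)) / (2 * sxy ω)
      else 0) :
    (∫⁻ ω, ENNReal.ofReal |βhat ω| ∂μ) = ⊤ := by
  set z : Fin n ⊕ Fin n → Ω → ℝ := fun j => (Sum.elim xs ys j + ·) ∘ e j
  have hzx : ∀ ω, (fun j => z j ω) ∘ Sum.inl = fun i => x i ω :=
    fun ω => funext fun i => (hx i ω).symm
  have hzy : ∀ ω, (fun j => z j ω) ∘ Sum.inr = fun i => y i ω :=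
    fun ω => funext fun i => (hy i ω).symm
  have hβ : ∀ ω, βhat ω = slopeEstimate fun j => z j ω := by
    intro ω
    simp only [slopeEstimate, orthogonalSlope, scatter, sampleMean, hzx, hzy, Fintype.card_fin,
      hβhat, hsxx, hsyy, hsxy, hxbar, hybar, sq]
  simp_rw [hβ]
  refine lintegral_abs_slopeEstimate_eq_top (m := Sum.elim xs ys) (by simpa using hn)
    (fun j => (measurable_const_add _).comp (hemeas j))
    (hindep.comp _ fun _ => measurable_const_add _) (fun _ => hσ2.ne') fun j => ?_
  rw [← Measure.map_map (measurable_const_add _) (hemeas j), hlaw j, gaussianReal_map_const_add,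
    zero_add]

/-- **Anderson (1976): the orthogonal-regression slope estimate has no moments.**
True points lie on a line `y = α* + β* x`; the observed points are the true points perturbed
by `2n` i.i.d. `N(0, σ²)` errors. The orthogonal (maximum likelihood) slope estimate
`β̂ = (s_yy − s_xx + √((s_yy − s_xx)² + 4 s_xy²)) / (2 s_xy)` (set to `0` on the null event
`s_xy = 0`) satisfies `E|β̂| = ∞`. -/
theorem anderson_slope_estimate_has_no_moments
    {Ω : Type*} [MeasurableSpace Ω] (μ : Measure Ω) [IsProbabilityMeasure μ]
    (n : ℕ) (hn : 2 ≤ n)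
    -- the true points, lying on the true line y = α* + β* x
    (αs βs : ℝ) (xs ys : Fin n → ℝ) (htrue : ∀ i, ys i = αs + βs * xs i)
    -- the errors: δ₁,…,δₙ,ε₁,…,εₙ i.i.d. normal, mean 0, variance σ² > 0
    (σ2 : NNReal) (hσ2 : 0 < σ2)
    (e : Fin n ⊕ Fin n → Ω → ℝ) (hemeas : ∀ j, Measurable (e j))
    (hindep : iIndepFun e μ)
    (hlaw : ∀ j, Measure.map (e j) μ = gaussianReal 0 σ2)
    -- the observed points
    (x y : Fin n → Ω → ℝ)
    (hx : ∀ i ω, x i ω = xs i + e (Sum.inl i) ω)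
    (hy : ∀ i ω, y i ω = ys i + e (Sum.inr i) ω)
    -- sample means and scatter statistics
    (xbar ybar sxx syy sxy : Ω → ℝ)
    (hxbar : ∀ ω, xbar ω = (∑ i, x i ω) / n)
    (hybar : ∀ ω, ybar ω = (∑ i, y i ω) / n)
    (hsxx : ∀ ω, sxx ω = ∑ i, (x i ω - xbar ω) ^ 2)
    (hsyy : ∀ ω, syy ω = ∑ i, (y i ω - ybar ω) ^ 2)
    (hsxy : ∀ ω, sxy ω = ∑ i, (x i ω - xbar ω) * (y i ω - ybar ω))
    -- the orthogonal-regression slope estimate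
    (βhat : Ω → ℝ)
    (hβhat : ∀ ω, βhat ω =
      if sxy ω ≠ 0 then
        (syy ω - sxx ω + Real.sqrt ((syy ω - sxx ω) ^ 2 + 4 * sxy ω ^ 2)) / (2 * sxy ω)
      else 0) :
    (∫⁻ ω, ENNReal.ofReal |βhat ω| ∂μ) = ⊤ :=
  anderson_slope_estimate_has_no_moments_general μ n hn xs ys σ2 hσ2 e hemeas hindep hlaw x y hx hy
    xbar ybar sxx syy sxy hxbar hybar hsxx hsyy hsxy βhat hβhat
end

section
/- Let x ≠ 0 and y ∈ ℝ. The three points (0,0), (0,−1), (x, 1+y) are not collinear, and their circumcenter (a,b) — the unique point equidistant from all three — satisfies b = −1/2 and a = (x² + 2 + 3y + y²)/(2x). In particular, if 0 < |x| ≤ 10⁻⁹ and |y| ≤ 10⁻⁹, then |a| ≥ 1/(3|x|). -/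
/-!
The first two points lie on the vertical axis, the third does not, so the points are not
collinear. Equidistance from `(0,0)` and `(0,-1)` forces `b = -1/2`; with that value, equidistance
from `(0,0)` and `(x, 1+y)` is the linear equation `2 x a = x² + (y+1)(y+2)`. Since
`(y+1)(y+2) ≥ 2/3` once `y ≥ -1/3`, the center has `|a| ≥ 1/(3|x|)`, which blows up as `x → 0`.
-/

theorem not_collinear_zero_zero_mk_zero_mk_of_ne_zero {c x z : ℝ} (hc : c ≠ 0) (hx : x ≠ 0) :
    ¬ Collinear ℝ ({(0, 0), (0, c), (x, z)} : Set (ℝ × ℝ)) := by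
  rw [collinear_iff_of_mem (Set.mem_insert _ _)]
  rintro ⟨v, hv⟩
  obtain ⟨t, ht⟩ := hv (0, c) (by simp)
  obtain ⟨s, hs⟩ := hv (x, z) (by simp)
  simp only [vadd_eq_add, Prod.ext_iff, Prod.fst_add, Prod.snd_add, Prod.smul_fst,
    Prod.smul_snd, smul_eq_mul, add_zero] at ht hs
  have ht0 : t ≠ 0 := by rintro rfl; exact hc (by simpa using ht.2)
  have hv1 : v.1 = 0 := (mul_eq_zero.mp ht.1.symm).resolve_left ht0
  exact hx (by rw [hs.1, hv1, mul_zero])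

theorem sq_add_sq_eq_sq_add_add_one_sq_iff (a b : ℝ) :
    a ^ 2 + b ^ 2 = a ^ 2 + (b + 1) ^ 2 ↔ b = -1 / 2 := by
  constructor <;> intro h
  · linarith
  · subst h; norm_num

theorem sq_add_sq_eq_iff_of_snd_eq_neg_half {x : ℝ} (hx : x ≠ 0) (y a : ℝ) :
    a ^ 2 + (-1 / 2) ^ 2 = (a - x) ^ 2 + (-1 / 2 - (1 + y)) ^ 2 ↔
      a = (x ^ 2 + 2 + 3 * y + y ^ 2) / (2 * x) := by
  rw [eq_div_iff (mul_ne_zero two_ne_zero hx)]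
  constructor <;> intro h <;> linarith

theorem two_thirds_le_sq_add_two_add_three_mul_add_sq {y : ℝ} (hy : -1 / 3 ≤ y) (x : ℝ) :
    2 / 3 ≤ x ^ 2 + 2 + 3 * y + y ^ 2 := by
  have hy' : 0 ≤ (y + 1 / 3) * (y + 1) := mul_nonneg (by linarith) (by linarith)
  nlinarith [sq_nonneg x]

theorem one_div_three_mul_abs_le_abs_div_two_mul {x N : ℝ} (hx : x ≠ 0) (hN : 2 / 3 ≤ N) :
    1 / (3 * |x|) ≤ |N / (2 * x)| := by
  have hx' : 0 < |x| := abs_pos.mpr hx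
  rw [abs_div, abs_mul, abs_two, abs_of_pos (by linarith : 0 < N),
    div_le_div_iff₀ (by positivity) (by positivity)]
  nlinarith

/-- For `x ≠ 0`, the three points `(0,0)`, `(0,−1)`, `(x, 1+y)` are not collinear; their
circumcenter `(a,b)` (the unique point equidistant from all three) satisfies `b = −1/2` and
`a = (x² + 2 + 3y + y²)/(2x)`; and if `0 < |x| ≤ 10⁻⁹` and `|y| ≤ 10⁻⁹` then
`|a| ≥ 1/(3|x|)`. -/
theorem circumcenter_three_points_formula (x y : ℝ) (hx : x ≠ 0) :
    ¬ Collinear ℝ ({((0 : ℝ), (0 : ℝ)), (0, -1), (x, 1 + y)} : Set (ℝ × ℝ)) ∧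
    (∃! c : ℝ × ℝ,
      c.1 ^ 2 + c.2 ^ 2 = c.1 ^ 2 + (c.2 + 1) ^ 2 ∧
      c.1 ^ 2 + c.2 ^ 2 = (c.1 - x) ^ 2 + (c.2 - (1 + y)) ^ 2) ∧
    (∀ a b : ℝ,
      a ^ 2 + b ^ 2 = a ^ 2 + (b + 1) ^ 2 →
      a ^ 2 + b ^ 2 = (a - x) ^ 2 + (b - (1 + y)) ^ 2 →
      b = -1 / 2 ∧ a = (x ^ 2 + 2 + 3 * y + y ^ 2) / (2 * x) ∧
        (|x| ≤ 1e-9 → |y| ≤ 1e-9 → 1 / (3 * |x|) ≤ |a|)) := by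
  have center_iff : ∀ a b : ℝ,
      (a ^ 2 + b ^ 2 = a ^ 2 + (b + 1) ^ 2 ∧
        a ^ 2 + b ^ 2 = (a - x) ^ 2 + (b - (1 + y)) ^ 2) ↔
      b = -1 / 2 ∧ a = (x ^ 2 + 2 + 3 * y + y ^ 2) / (2 * x) := by
    intro a b
    rw [sq_add_sq_eq_sq_add_add_one_sq_iff, ← sq_add_sq_eq_iff_of_snd_eq_neg_half hx y a]
    exact and_congr_right fun hb => by rw [hb]
  refine ⟨not_collinear_zero_zero_mk_zero_mk_of_ne_zero (by norm_num) hx, ?_, ?_⟩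
  · refine ⟨((x ^ 2 + 2 + 3 * y + y ^ 2) / (2 * x), -1 / 2), (center_iff _ _).2 ⟨rfl, rfl⟩, ?_⟩
    rintro ⟨a, b⟩ h
    obtain ⟨rfl, rfl⟩ := (center_iff a b).1 h
    rfl
  · intro a b h₁ h₂
    obtain ⟨hb, rfl⟩ := (center_iff a b).1 ⟨h₁, h₂⟩
    refine ⟨hb, rfl, fun _ hy => one_div_three_mul_abs_le_abs_div_two_mul hx ?_⟩
    exact two_thirds_le_sq_add_two_add_three_mul_add_sq (by linarith [neg_abs_le y]) x
end

section
/- Let 0 < h ≤ 10⁻⁹. Suppose a circle with center (a,b) ∈ ℝ² and radius R > 0 passes within distance h² of each of the three points (0,0), (0,−1), (h,1); that is, |dist((0,0),(a,b)) − R| ≤ h², |dist((0,−1),(a,b)) − R| ≤ h², and |dist((h,1),(a,b)) − R| ≤ h². Then a > 1/(2h). -/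
set_option maxHeartbeats 1000000


/-- If `0 < h ≤ 10⁻⁹` and a circle with center `(a,b)` and radius `R > 0` passes within
distance `h²` of each of the three points `(0,0)`, `(0,−1)`, `(h,1)`, then `a > 1/(2h)`. -/
theorem nearly_interpolating_circle_center_escapes
    (h : ℝ) (hh0 : 0 < h) (hh : h ≤ 1e-9)
    (a b R : ℝ) (hR : 0 < R)
    (h1 : |Real.sqrt (a ^ 2 + b ^ 2) - R| ≤ h ^ 2)
    (h2 : |Real.sqrt (a ^ 2 + (b + 1) ^ 2) - R| ≤ h ^ 2)
    (h3 : |Real.sqrt ((a - h) ^ 2 + (b - 1) ^ 2) - R| ≤ h ^ 2) :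
    1 / (2 * h) < a := by
  set s1 := Real.sqrt (a ^ 2 + b ^ 2) with hs1def
  set s2 := Real.sqrt (a ^ 2 + (b + 1) ^ 2) with hs2def
  set s3 := Real.sqrt ((a - h) ^ 2 + (b - 1) ^ 2) with hs3def
  have hs1n : 0 ≤ s1 := Real.sqrt_nonneg _
  have hs2n : 0 ≤ s2 := Real.sqrt_nonneg _
  have hs3n : 0 ≤ s3 := Real.sqrt_nonneg _
  have e1 : s1 ^ 2 = a ^ 2 + b ^ 2 := Real.sq_sqrt (by positivity)
  have e2 : s2 ^ 2 = a ^ 2 + (b + 1) ^ 2 := Real.sq_sqrt (by positivity)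
  have e3 : s3 ^ 2 = (a - h) ^ 2 + (b - 1) ^ 2 := Real.sq_sqrt (by positivity)
  rw [abs_le] at h1 h2 h3
  have d2 : -(2 * h ^ 2) ≤ s2 - s1 ∧ s2 - s1 ≤ 2 * h ^ 2 := by constructor <;> linarith [h1.1, h1.2, h2.1, h2.2]
  have d3 : -(2 * h ^ 2) ≤ s3 - s1 ∧ s3 - s1 ≤ 2 * h ^ 2 := by constructor <;> linarith [h1.1, h1.2, h3.1, h3.2]
  have hh2 : h ^ 2 ≤ 1e-18 := by nlinarith
  -- s2² - s1² = 2b + 1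
  have k2 : s2 ^ 2 - s1 ^ 2 = 2 * b + 1 := by rw [e1, e2]; ring
  have k3 : s3 ^ 2 - s1 ^ 2 = -(2 * a * h) + h ^ 2 - 2 * b + 1 := by rw [e1, e3]; ring
  -- bound |2b+1| ≤ 2h²(s1+s2)
  have hss2 : (0:ℝ) ≤ s1 + s2 := by linarith
  have hss3 : (0:ℝ) ≤ s1 + s3 := by linarith
  have b2u : 2 * b + 1 ≤ 2 * h ^ 2 * (s1 + s2) := by
    linarith [k2, mul_le_mul_of_nonneg_right d2.2 hss2]
  have b2l : -(2 * h ^ 2 * (s1 + s2)) ≤ 2 * b + 1 := by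
    linarith [k2, mul_le_mul_of_nonneg_right d2.1 hss2]
  have b3u : -(2 * a * h) + h ^ 2 - 2 * b + 1 ≤ 2 * h ^ 2 * (s1 + s3) := by
    linarith [k3, mul_le_mul_of_nonneg_right d3.2 hss3]
  -- s2, s3 ≤ s1 + 2h²
  have s2u : s2 ≤ s1 + 2 * h ^ 2 := by linarith [d2.2]
  have s3u : s3 ≤ s1 + 2 * h ^ 2 := by linarith [d3.2]
  -- |b| bound
  have hb : |b| ≤ 1 / 2 + h ^ 2 * (s1 + s2) := by
    rcases abs_cases b with ⟨hb1, hb2⟩ | ⟨hb1, hb2⟩ <;> rw [hb1] <;> linarith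
  -- s1 ≤ |a| + |b|
  have hab : s1 ≤ |a| + |b| := by
    have h0 : a ^ 2 + b ^ 2 ≤ (|a| + |b|) ^ 2 := by
      have h' : (|a| + |b|) ^ 2 = a ^ 2 + 2 * (|a| * |b|) + b ^ 2 := by
        rw [add_sq, sq_abs, sq_abs]; ring
      linarith [mul_nonneg (abs_nonneg a) (abs_nonneg b)]
    calc s1 ≤ Real.sqrt ((|a| + |b|) ^ 2) := Real.sqrt_le_sqrt h0
      _ = |a| + |b| := Real.sqrt_sq (by positivity)
  have h4le : h ^ 4 ≤ h ^ 2 := by nlinarith [sq_nonneg h, sq_nonneg (h^2)]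
  have hq : h ^ 2 ≤ 1 / 4 := by nlinarith
  -- s1 ≤ 2|a| + 5
  have hs1b : s1 ≤ 2 * |a| + 5 := by
    have step : s1 ≤ |a| + 1 / 2 + h ^ 2 * (s1 + s2) := by linarith
    have p2 : h ^ 2 * s2 ≤ h ^ 2 * (s1 + 2 * h ^ 2) :=
      mul_le_mul_of_nonneg_left s2u (sq_nonneg h)
    have p1 : h ^ 2 * s1 ≤ 1 / 4 * s1 := mul_le_mul_of_nonneg_right hq hs1n
    nlinarith [step, p2, p1, h4le]
  -- main inequality
  have main : 2 * a * h ≥ 2 + h ^ 2 - 2 * h ^ 2 * (s1 + s2) - 2 * h ^ 2 * (s1 + s3) := by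
    linarith [b3u, b2u]
  have main2 : 2 * a * h ≥ 2 - 8 * h ^ 2 * s1 - 9 * h ^ 4 := by
    have p2 : h ^ 2 * s2 ≤ h ^ 2 * (s1 + 2 * h ^ 2) :=
      mul_le_mul_of_nonneg_left s2u (sq_nonneg h)
    have p3 : h ^ 2 * s3 ≤ h ^ 2 * (s1 + 2 * h ^ 2) :=
      mul_le_mul_of_nonneg_left s3u (sq_nonneg h)
    nlinarith [main, p2, p3, sq_nonneg h]
  have main3 : 2 * a * h ≥ 2 - 16 * h ^ 2 * |a| - 40 * h ^ 2 - 9 * h ^ 4 := by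
    have p : h ^ 2 * s1 ≤ h ^ 2 * (2 * |a| + 5) :=
      mul_le_mul_of_nonneg_left hs1b (sq_nonneg h)
    nlinarith [main2, p]
  have hapos : 0 < a := by
    by_contra hc
    push_neg at hc
    have habs : |a| = -a := abs_of_nonpos hc
    rw [habs] at main3
    have hfac : 0 ≤ h - 8 * h ^ 2 := by
      linarith [mul_nonneg hh0.le (by linarith : (0:ℝ) ≤ 1 - 8 * h)]
    have : 2 * a * (h - 8 * h ^ 2) ≤ 0 :=
      mul_nonpos_of_nonpos_of_nonneg (by linarith) hfac
    linarith [main3, this, hh2, h4le]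
  have habs : |a| = a := abs_of_pos hapos
  rw [habs] at main3
  rw [div_lt_iff₀ (by positivity)]
  have key : a * h * h ≤ a * h * 1e-9 :=
    mul_le_mul_of_nonneg_left hh (le_of_lt (mul_pos hapos hh0))
  linarith [main3, key, hh2, h4le]
end

section
/- Let n ≥ 3 and let (x₁,y₁),…,(xₙ,yₙ) ∈ ℝ² be n distinct points lying on a common line. Then the geometric circle-fit objective F(a,b,R) = Σ_{i=1}^n [√((xᵢ−a)²+(yᵢ−b)²) − R]² satisfies F(a,b,R) > 0 for every (a,b) ∈ ℝ² and R > 0, while inf over (a,b) ∈ ℝ², R > 0 of F(a,b,R) = 0; consequently F attains no global minimum over circles. -/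
/-!
Three distinct points of a circle are affinely independent (`Cospherical.affineIndependent`), so
no circle passes through three distinct collinear points and every value of the objective is
positive. On the other hand, the circle of radius `m ‖d‖` tangent at `p₀` to the line `p₀ + ℝ d`
misses the point `p₀ + t d` by `‖d‖ (√(t² + m²) - m) ≤ ‖d‖ t² / (2m)`, so along this family the
objective is `O(1/m²)` and its infimum is `0`, which therefore is not attained.
-/

open Filter Topology

theorem Collinear.image_affineMap {k V₁ P₁ V₂ P₂ : Type*} [DivisionRing k]
    [AddCommGroup V₁] [Module k V₁] [AddTorsor V₁ P₁] [AddCommGroup V₂] [Module k V₂]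
    [AddTorsor V₂ P₂] {s : Set P₁} (h : Collinear k s) (f : P₁ →ᵃ[k] P₂) :
    Collinear k (f '' s) := by
  obtain ⟨p₀, v, hv⟩ := (collinear_iff_exists_forall_eq_smul_vadd s).1 h
  refine (collinear_iff_exists_forall_eq_smul_vadd _).2 ⟨f p₀, f.linear v, ?_⟩
  rintro _ ⟨p, hp, rfl⟩
  obtain ⟨r, rfl⟩ := hv p hp
  exact ⟨r, by rw [f.map_vadd, map_smul]⟩

theorem Collinear.exists_ne_zero_forall_eq_smul_vadd {k V P : Type*} [DivisionRing k]
    [AddCommGroup V] [Module k V] [AddTorsor V P] [Nontrivial V] {s : Set P}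
    (h : Collinear k s) : ∃ (p₀ : P) (v : V), v ≠ 0 ∧ ∀ p ∈ s, ∃ r : k, p = r • v +ᵥ p₀ := by
  obtain ⟨p₀, v, hv⟩ := (collinear_iff_exists_forall_eq_smul_vadd s).1 h
  by_cases hv0 : v = 0
  · obtain ⟨w, hw⟩ := exists_ne (0 : V)
    refine ⟨p₀, w, hw, fun p hp => ⟨0, ?_⟩⟩
    obtain ⟨r, rfl⟩ := hv p hp
    simp [hv0]
  · exact ⟨p₀, v, hv0, hv⟩

theorem EuclideanGeometry.Cospherical.not_collinear_of_mem_of_ne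
    {V P : Type*} [NormedAddCommGroup V] [InnerProductSpace ℝ V] [MetricSpace P]
    [NormedAddTorsor V P] {s : Set P} (hs : EuclideanGeometry.Cospherical s) {p₁ p₂ p₃ : P}
    (h₁ : p₁ ∈ s) (h₂ : p₂ ∈ s) (h₃ : p₃ ∈ s) (h₁₂ : p₁ ≠ p₂) (h₁₃ : p₁ ≠ p₃) (h₂₃ : p₂ ≠ p₃) :
    ¬ Collinear ℝ s := fun hcol =>
  affineIndependent_iff_not_collinear_set.1 (hs.affineIndependent_of_mem_of_ne h₁ h₂ h₃ h₁₂ h₁₃ h₂₃)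
    (hcol.subset (by simp [Set.insert_subset_iff, h₁, h₂, h₃]))

theorem Real.sq_sqrt_sq_add_sq_sub_le (t : ℝ) {m : ℝ} (hm : 0 < m) :
    (√(t ^ 2 + m ^ 2) - m) ^ 2 ≤ (t ^ 2 / (2 * m)) ^ 2 := by
  set s := √(t ^ 2 + m ^ 2)
  have hs : s ^ 2 = t ^ 2 + m ^ 2 := Real.sq_sqrt (by positivity)
  have hms : m ≤ s := Real.le_sqrt_of_sq_le (by nlinarith)
  have hupper : s - m ≤ t ^ 2 / (2 * m) := by
    rw [le_div_iff₀ (by positivity)]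
    nlinarith
  exact pow_le_pow_left₀ (by linarith) hupper 2

theorem WithLp.prod_dist_toLp_eq_sqrt (q c : ℝ × ℝ) :
    dist (WithLp.toLp 2 q) (WithLp.toLp 2 c) = √((q.1 - c.1) ^ 2 + (q.2 - c.2) ^ 2) := by
  simp [WithLp.prod_dist_eq_of_L2, Real.dist_eq, sq_abs]

noncomputable def circleFit {ι : Type*} [Fintype ι] (p : ι → ℝ × ℝ) (a b R : ℝ) : ℝ :=
  ∑ i, (√(((p i).1 - a) ^ 2 + ((p i).2 - b) ^ 2) - R) ^ 2

section circleFit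

variable {ι : Type*} [Fintype ι] (p : ι → ℝ × ℝ)

theorem circleFit_nonneg (a b R : ℝ) : 0 ≤ circleFit p a b R :=
  Finset.sum_nonneg fun _ _ => sq_nonneg _

-- `ℝ × ℝ` carries the sup metric; the Euclidean plane is `WithLp 2 (ℝ × ℝ)`.
theorem cospherical_of_circleFit_eq_zero {a b R : ℝ} (h : circleFit p a b R = 0) :
    EuclideanGeometry.Cospherical (Set.range (WithLp.toLp 2 ∘ p)) := by
  refine ⟨WithLp.toLp 2 (a, b), R, ?_⟩
  rintro _ ⟨i, rfl⟩
  have hi := (Finset.sum_eq_zero_iff_of_nonneg fun _ _ => sq_nonneg _).1 h i (Finset.mem_univ i)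
  rw [Function.comp_apply, WithLp.prod_dist_toLp_eq_sqrt]
  exact sub_eq_zero.1 (pow_eq_zero_iff two_ne_zero |>.1 hi)

theorem circleFit_pos_of_collinear (hp : Function.Injective p) (hcard : 2 < Fintype.card ι)
    (hcol : Collinear ℝ (Set.range p)) (a b R : ℝ) : 0 < circleFit p a b R := by
  refine (circleFit_nonneg p a b R).lt_of_ne fun h => ?_
  obtain ⟨i, j, k, hij, hik, hjk⟩ := Fintype.two_lt_card_iff.1 hcard
  have hq : Function.Injective (WithLp.toLp 2 ∘ p) := (WithLp.toLp_injective 2).comp hp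
  refine (cospherical_of_circleFit_eq_zero p h.symm).not_collinear_of_mem_of_ne
    (Set.mem_range_self i) (Set.mem_range_self j) (Set.mem_range_self k)
    (hq.ne hij) (hq.ne hik) (hq.ne hjk) ?_
  rw [Set.range_comp]
  exact hcol.image_affineMap (WithLp.linearEquiv 2 ℝ (ℝ × ℝ)).symm.toLinearMap.toAffineMap

/-- The centre `(p₀.1 - m * d.2, p₀.2 + m * d.1)` is `p₀ + m d⊥`. -/
theorem circleFit_tangent_le (p₀ d : ℝ × ℝ) (t : ι → ℝ) {m : ℝ} (hm : 0 < m) :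
    circleFit (fun i => t i • d + p₀) (p₀.1 - m * d.2) (p₀.2 + m * d.1)
        (m * √(d.1 ^ 2 + d.2 ^ 2)) ≤ (d.1 ^ 2 + d.2 ^ 2) * (∑ i, t i ^ 4 / 4) / m ^ 2 := by
  have hd : 0 ≤ d.1 ^ 2 + d.2 ^ 2 := by positivity
  calc circleFit _ _ _ _ = ∑ i, (d.1 ^ 2 + d.2 ^ 2) * (√(t i ^ 2 + m ^ 2) - m) ^ 2 := by
        refine Finset.sum_congr rfl fun i _ => ?_
        have harg : ((t i • d + p₀).1 - (p₀.1 - m * d.2)) ^ 2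
            + ((t i • d + p₀).2 - (p₀.2 + m * d.1)) ^ 2
            = (t i ^ 2 + m ^ 2) * (d.1 ^ 2 + d.2 ^ 2) := by
          simp only [Prod.fst_add, Prod.snd_add, Prod.smul_fst, Prod.smul_snd, smul_eq_mul]
          ring
        rw [harg, Real.sqrt_mul (by positivity), ← sub_mul, mul_pow, Real.sq_sqrt hd, mul_comm]
    _ ≤ ∑ i, (d.1 ^ 2 + d.2 ^ 2) * (t i ^ 2 / (2 * m)) ^ 2 :=
        Finset.sum_le_sum fun i _ =>
          mul_le_mul_of_nonneg_left (Real.sq_sqrt_sq_add_sq_sub_le (t i) hm) hd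
    _ = (d.1 ^ 2 + d.2 ^ 2) * (∑ i, t i ^ 4 / 4) / m ^ 2 := by
        rw [← Finset.mul_sum, mul_div_assoc, Finset.sum_div]
        congr 1
        refine Finset.sum_congr rfl fun i _ => ?_
        field_simp
        ring

theorem isGLB_circleFit_of_collinear (hcol : Collinear ℝ (Set.range p)) :
    IsGLB {s | ∃ a b R, 0 < R ∧ circleFit p a b R = s} 0 := by
  obtain ⟨p₀, d, hd, hline⟩ := hcol.exists_ne_zero_forall_eq_smul_vadd
  choose t ht using fun i => hline (p i) (Set.mem_range_self i)
  obtain rfl : p = fun i => t i • d + p₀ := funext ht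
  have hnorm : 0 < √(d.1 ^ 2 + d.2 ^ 2) := by
    refine Real.sqrt_pos.2 ?_
    rcases ne_or_eq d.1 0 with h | h
    · positivity
    · have : d.2 ≠ 0 := fun h' => hd (Prod.ext h h')
      positivity
  refine isGLB_of_mem_closure (fun s ⟨a, b, R, _, hs⟩ => hs ▸ circleFit_nonneg _ a b R) ?_
  have hlim : Tendsto (fun m : ℝ => (d.1 ^ 2 + d.2 ^ 2) * (∑ i, t i ^ 4 / 4) / m ^ 2) atTop (𝓝 0) :=
    tendsto_const_nhds.div_atTop (tendsto_pow_atTop two_ne_zero)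
  refine mem_closure_of_tendsto (b := atTop) (f := fun m : ℝ => circleFit (fun i => t i • d + p₀)
      (p₀.1 - m * d.2) (p₀.2 + m * d.1) (m * √(d.1 ^ 2 + d.2 ^ 2))) ?_ ?_
  · refine squeeze_zero' (.of_forall fun m => circleFit_nonneg _ _ _ _) ?_ hlim
    filter_upwards [eventually_gt_atTop 0] with m hm
    exact circleFit_tangent_le p₀ d t hm
  · filter_upwards [eventually_gt_atTop 0] with m hm
    exact ⟨_, _, _, mul_pos hm hnorm, rfl⟩

end circleFit

/-- For `n ≥ 3` distinct collinear data points, the geometric circle-fit objective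
`F(a,b,R) = ∑ i, (√((xᵢ−a)² + (yᵢ−b)²) − R)²` is strictly positive for every circle, yet its
infimum over all circles is `0`; consequently `F` attains no global minimum over circles. -/
theorem circleFit_collinear_no_minimum
    (n : ℕ) (hn : 3 ≤ n) (p : Fin n → ℝ × ℝ)
    (hdist : Function.Injective p) (hcol : Collinear ℝ (Set.range p))
    (F : ℝ → ℝ → ℝ → ℝ)
    (hF : ∀ a b R, F a b R =
      ∑ i, (Real.sqrt (((p i).1 - a) ^ 2 + ((p i).2 - b) ^ 2) - R) ^ 2) :
    (∀ a b R : ℝ, 0 < R → 0 < F a b R) ∧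
    IsGLB {s : ℝ | ∃ a b R : ℝ, 0 < R ∧ F a b R = s} 0 ∧
    ¬ ∃ a b R : ℝ, 0 < R ∧ ∀ a' b' R' : ℝ, 0 < R' → F a b R ≤ F a' b' R' := by
  obtain rfl : F = circleFit p := funext₃ hF
  have hpos : ∀ a b R, 0 < circleFit p a b R :=
    circleFit_pos_of_collinear p hdist (by rw [Fintype.card_fin]; omega) hcol
  have hglb := isGLB_circleFit_of_collinear p hcol
  refine ⟨fun a b R _ => hpos a b R, hglb, ?_⟩
  rintro ⟨a, b, R, -, hmin⟩
  have hle : circleFit p a b R ≤ 0 := hglb.2 fun _ ⟨a', b', R', hR', hs⟩ => hs ▸ hmin a' b' R' hR'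
  exact (hpos a b R).not_ge hle
end
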